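/- arXiv:1502.04430 — 3 statements merged into one kernel-verified Lean document; each statement's English description precedes it below -/
import Mathlib

section
/- For any finite random variables K, U, X, Y, Z satisfying the Markov chain (K,U) − X − (Y,Z) (i.e., I(KU : YZ | X) = 0), the identity I(K:Y|U) − I(K:Z|U) = I(X:Y|Z) − I(X:Y|K,U,Z) − I(U:Y|Z) − I(K:Z|Y,U) holds. -/
open Finset

/-- A probability mass function on a finite type, given as a nonnegative function summing to 1. -/
def IsProb {Ω : Type*} [Fintype Ω] (p : Ω → ℝ) : Prop :=
  (∀ ω, 0 ≤ p ω) ∧ ∑ ω, p ω = 1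

/-- Distribution of the random variable `f` under `p`. -/
noncomputable def dist {Ω A : Type*} [Fintype Ω] [DecidableEq A]
    (p : Ω → ℝ) (f : Ω → A) (a : A) : ℝ :=
  ∑ ω ∈ Finset.univ.filter (fun ω => f ω = a), p ω

/-- Shannon entropy of the random variable `f` under `p`. -/
noncomputable def ent {Ω A : Type*} [Fintype Ω] [DecidableEq A]
    (p : Ω → ℝ) (f : Ω → A) : ℝ :=
  ∑ a ∈ Finset.univ.image f, Real.negMulLog (dist p f a)

/-- Conditional entropy H(f|g). -/
noncomputable def condEnt {Ω A B : Type*} [Fintype Ω] [DecidableEq A] [DecidableEq B]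
    (p : Ω → ℝ) (f : Ω → A) (g : Ω → B) : ℝ :=
  ent p (fun ω => (f ω, g ω)) - ent p g

/-- Conditional mutual information I(f:g|h). -/
noncomputable def cmi {Ω A B C : Type*} [Fintype Ω] [DecidableEq A] [DecidableEq B] [DecidableEq C]
    (p : Ω → ℝ) (f : Ω → A) (g : Ω → B) (h : Ω → C) : ℝ :=
  condEnt p f h + condEnt p g h - condEnt p (fun ω => (f ω, g ω)) h

section Aux
variable {Ω A B C : Type*} [Fintype Ω]

lemma dist_nonneg' [DecidableEq A] {p : Ω → ℝ} (hp : ∀ ω, 0 ≤ p ω) (f : Ω → A) (a : A) :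
    0 ≤ dist p f a :=
  Finset.sum_nonneg fun ω _ => hp ω

lemma dist_congr [DecidableEq A] [DecidableEq B] (p : Ω → ℝ) {f : Ω → A} {g : Ω → B}
    {a : A} {b : B} (h : ∀ ω, f ω = a ↔ g ω = b) : dist p f a = dist p g b := by
  unfold _root_.dist
  congr 1
  exact Finset.filter_congr fun ω _ => by rw [h ω]

lemma sum_dist [DecidableEq A] [Fintype A] (p : Ω → ℝ) (f : Ω → A) :
    ∑ a, dist p f a = ∑ ω, p ω :=
  Finset.sum_fiberwise _ _ _

lemma ent_eq_sum [DecidableEq A] [Fintype A] (p : Ω → ℝ) (f : Ω → A) :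
    ent p f = ∑ a, Real.negMulLog (dist p f a) := by
  unfold ent
  apply Finset.sum_subset (Finset.subset_univ _)
  intro a _ ha
  have h0 : dist p f a = 0 := by
    unfold _root_.dist
    have : Finset.univ.filter (fun ω => f ω = a) = ∅ :=
      Finset.filter_eq_empty_iff.mpr fun ω _ h =>
        ha (Finset.mem_image.mpr ⟨ω, Finset.mem_univ ω, h⟩)
    simp [this]
  simp [h0]

lemma ent_comp [DecidableEq A] [DecidableEq B] (p : Ω → ℝ) (f : Ω → A) (e : A → B)
    (he : Function.Injective e) : ent p (fun ω => e (f ω)) = ent p f := by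
  unfold ent
  have himg : Finset.univ.image (fun ω => e (f ω)) = (Finset.univ.image f).image e := by
    rw [Finset.image_image]; rfl
  rw [himg, Finset.sum_image (fun a _ b _ h => he h)]
  refine Finset.sum_congr rfl fun a _ => ?_
  congr 1
  exact dist_congr p fun ω => ⟨fun h => he h, fun h => by rw [h]⟩

/-- marginalize the second component. -/
lemma dist_fst [DecidableEq A] [DecidableEq B] [Fintype B] (p : Ω → ℝ)
    (f : Ω → A) (g : Ω → B) (a : A) :
    ∑ b, dist p (fun ω => (f ω, g ω)) (a, b) = dist p f a := by
  unfold _root_.dist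
  rw [← Finset.sum_fiberwise (Finset.univ.filter fun ω => f ω = a) g p]
  refine Finset.sum_congr rfl fun b _ => ?_
  rw [Finset.filter_filter]
  congr 1
  ext ω
  simp [Prod.ext_iff]

lemma dist_snd [DecidableEq A] [DecidableEq B] [Fintype A] (p : Ω → ℝ)
    (f : Ω → A) (g : Ω → B) (b : B) :
    ∑ a, dist p (fun ω => (f ω, g ω)) (a, b) = dist p g b := by
  unfold _root_.dist
  rw [← Finset.sum_fiberwise (Finset.univ.filter fun ω => g ω = b) f p]
  refine Finset.sum_congr rfl fun a _ => ?_
  rw [Finset.filter_filter]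
  congr 1
  ext ω
  simp [Prod.ext_iff, and_comm]

end Aux

lemma sum_comm3 {A B C M : Type*} [Fintype A] [Fintype B] [Fintype C] [AddCommMonoid M]
    (F : A → B → C → M) :
    ∑ a, ∑ b, ∑ c, F a b c = ∑ c, ∑ a, ∑ b, F a b c :=
  (Finset.sum_congr rfl fun _ _ => Finset.sum_comm).trans Finset.sum_comm


lemma cmi_eq_ent (Ω A B C : Type*) [Fintype Ω] [DecidableEq A] [DecidableEq B] [DecidableEq C]
    (p : Ω → ℝ) (f : Ω → A) (g : Ω → B) (h : Ω → C) :
    cmi p f g h = ent p (fun ω => (f ω, h ω)) + ent p (fun ω => (g ω, h ω))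
      - ent p (fun ω => ((f ω, g ω), h ω)) - ent p h := by
  simp only [cmi, condEnt]; ring

lemma cmi_nonneg {Ω A B C : Type*} [Fintype Ω] [Fintype A] [Fintype B] [Fintype C]
    [DecidableEq A] [DecidableEq B] [DecidableEq C]
    (p : Ω → ℝ) (hp : IsProb p) (f : Ω → A) (g : Ω → B) (h : Ω → C) :
    0 ≤ cmi p f g h := by
  classical
  set w : A → B → C → ℝ := fun a b c => dist p (fun ω => (f ω, g ω, h ω)) (a, b, c) with hwdef
  have hw0 : ∀ a b c, 0 ≤ w a b c := fun a b c => dist_nonneg' hp.1 _ _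
  -- marginals
  have hfh : ∀ a c, dist p (fun ω => (f ω, h ω)) (a, c) = ∑ b, w a b c := by
    intro a c
    rw [← dist_fst p (fun ω => (f ω, h ω)) g (a, c)]
    refine Finset.sum_congr rfl fun b _ => dist_congr p fun ω => ?_
    simp only [Prod.ext_iff]; tauto
  have hgh : ∀ b c, dist p (fun ω => (g ω, h ω)) (b, c) = ∑ a, w a b c := by
    intro b c
    rw [← dist_snd p f (fun ω => (g ω, h ω)) (b, c)]
  have hh : ∀ c, dist p h c = ∑ a, ∑ b, w a b c := by
    intro c
    rw [← dist_snd p (fun ω => (f ω, g ω)) h c, Fintype.sum_prod_type]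
    refine Finset.sum_congr rfl fun a _ => Finset.sum_congr rfl fun b _ =>
      dist_congr p fun ω => ?_
    simp only [Prod.ext_iff]; tauto
  -- entropies as triple sums, outer index c
  have hE2 : ent p (fun ω => (f ω, h ω)) = ∑ c, ∑ a, ∑ b, -(w a b c * Real.log (∑ x, w a x c)) := by
    rw [ent_eq_sum, Fintype.sum_prod_type, Finset.sum_comm]
    refine Finset.sum_congr rfl fun c _ => Finset.sum_congr rfl fun a _ => ?_
    rw [hfh a c]
    simp only [Real.negMulLog_eq_neg]
    rw [Finset.sum_mul, ← Finset.sum_neg_distrib]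
  have hE3 : ent p (fun ω => (g ω, h ω)) = ∑ c, ∑ a, ∑ b, -(w a b c * Real.log (∑ x, w x b c)) := by
    rw [ent_eq_sum, Fintype.sum_prod_type, Finset.sum_comm]
    refine (Finset.sum_congr rfl fun c _ => ?_).trans rfl
    rw [Finset.sum_comm]
    refine Finset.sum_congr rfl fun b _ => ?_
    rw [hgh b c]
    simp only [Real.negMulLog_eq_neg]
    rw [Finset.sum_mul, ← Finset.sum_neg_distrib]
  have hE1 : ent p h = ∑ c, ∑ a, ∑ b, -(w a b c * Real.log (∑ x, ∑ y, w x y c)) := by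
    rw [ent_eq_sum]
    refine Finset.sum_congr rfl fun c _ => ?_
    rw [hh c]
    simp only [Real.negMulLog_eq_neg]
    rw [Finset.sum_mul, ← Finset.sum_neg_distrib]
    refine Finset.sum_congr rfl fun a _ => ?_
    rw [Finset.sum_mul, ← Finset.sum_neg_distrib]
  have hEw : ent p (fun ω => ((f ω, g ω), h ω)) = ∑ c, ∑ a, ∑ b, Real.negMulLog (w a b c) := by
    have e1 : ent p (fun ω => ((f ω, g ω), h ω)) = ent p (fun ω => (f ω, g ω, h ω)) := by
      have : Function.Injective (fun x : A × B × C => ((x.1, x.2.1), x.2.2)) := by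
        rintro ⟨a, b, c⟩ ⟨a', b', c'⟩ hx
        simp only [Prod.ext_iff] at hx ⊢
        tauto
      exact ent_comp p (fun ω => (f ω, g ω, h ω)) (fun x => ((x.1, x.2.1), x.2.2)) this
    rw [e1, ent_eq_sum]
    simp only [Fintype.sum_prod_type]
    exact sum_comm3 fun a b c => Real.negMulLog (w a b c)
  -- total mass
  have htot : ∑ c, ∑ a, ∑ b, w a b c = 1 := by
    have := sum_dist p (fun ω => (f ω, g ω, h ω))
    rw [hp.2] at this
    rw [← this]
    simp only [Fintype.sum_prod_type]
    exact (sum_comm3 fun a b c => w a b c).symm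
  have key : cmi p f g h = ∑ c, ∑ a, ∑ b,
      (-(w a b c * Real.log (∑ x, w a x c)) + -(w a b c * Real.log (∑ x, w x b c))
        - Real.negMulLog (w a b c) - -(w a b c * Real.log (∑ x, ∑ y, w x y c))) := by
    rw [cmi_eq_ent, hE2, hE3, hEw, hE1]
    simp only [← Finset.sum_add_distrib, ← Finset.sum_sub_distrib]
  have bound : ∀ c a b,
      w a b c - (if (∑ x, ∑ y, w x y c) = 0 then 0
          else (∑ x, w a x c) * (∑ x, w x b c) / (∑ x, ∑ y, w x y c)) ≤
      (-(w a b c * Real.log (∑ x, w a x c)) + -(w a b c * Real.log (∑ x, w x b c))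
        - Real.negMulLog (w a b c) - -(w a b c * Real.log (∑ x, ∑ y, w x y c))) := by
    intro c a b
    set m2 := ∑ x, w a x c with hm2def
    set m3 := ∑ x, w x b c with hm3def
    set m1 := ∑ x, ∑ y, w x y c with hm1def
    have hm2n : 0 ≤ m2 := Finset.sum_nonneg fun x _ => hw0 a x c
    have hm3n : 0 ≤ m3 := Finset.sum_nonneg fun x _ => hw0 x b c
    have hm1n : 0 ≤ m1 := Finset.sum_nonneg fun x _ => Finset.sum_nonneg fun y _ => hw0 x y c
    have hite : 0 ≤ (if m1 = 0 then 0 else m2 * m3 / m1) := by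
      split
      · exact le_refl 0
      · exact div_nonneg (mul_nonneg hm2n hm3n) hm1n
    rcases eq_or_lt_of_le (hw0 a b c) with hw | hw
    · rw [← hw]
      simp only [zero_mul, neg_zero, Real.negMulLog_zero, sub_zero, add_zero, zero_add, zero_sub]
      linarith
    · have hm2 : 0 < m2 :=
        lt_of_lt_of_le hw (Finset.single_le_sum (fun x _ => hw0 a x c) (Finset.mem_univ b))
      have hm3 : 0 < m3 :=
        lt_of_lt_of_le hw (Finset.single_le_sum (fun x _ => hw0 x b c) (Finset.mem_univ a))
      have hm1 : 0 < m1 :=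
        lt_of_lt_of_le hm2 (Finset.single_le_sum
          (fun x _ => Finset.sum_nonneg fun y _ => hw0 x y c) (Finset.mem_univ a))
      rw [if_neg (ne_of_gt hm1)]
      have harg : 0 < w a b c * m1 / (m2 * m3) := div_pos (mul_pos hw hm1) (mul_pos hm2 hm3)
      have hlog := Real.one_sub_inv_le_log_of_pos harg
      rw [Real.log_div (ne_of_gt (mul_pos hw hm1)) (ne_of_gt (mul_pos hm2 hm3)),
        Real.log_mul (ne_of_gt hw) (ne_of_gt hm1),
        Real.log_mul (ne_of_gt hm2) (ne_of_gt hm3)] at hlog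
      have hinv : (w a b c * m1 / (m2 * m3))⁻¹ = m2 * m3 / (w a b c * m1) := by
        field_simp
      rw [hinv] at hlog
      have hmul := mul_le_mul_of_nonneg_left hlog (le_of_lt hw)
      have hsimp : w a b c * (1 - m2 * m3 / (w a b c * m1)) = w a b c - m2 * m3 / m1 := by
        field_simp
      rw [hsimp] at hmul
      simp only [Real.negMulLog_eq_neg]
      ring_nf at hmul ⊢
      linarith
  have step1 : ∑ c, ∑ a, ∑ b, (w a b c - (if (∑ x, ∑ y, w x y c) = 0 then 0
      else (∑ x, w a x c) * (∑ x, w x b c) / (∑ x, ∑ y, w x y c))) ≤ cmi p f g h := by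
    rw [key]
    exact Finset.sum_le_sum fun c _ => Finset.sum_le_sum fun a _ =>
      Finset.sum_le_sum fun b _ => bound c a b
  refine le_trans ?_ step1
  refine Finset.sum_nonneg fun c _ => ?_
  simp only [Finset.sum_sub_distrib]
  rw [sub_nonneg]
  by_cases hc : (∑ x, ∑ y, w x y c) = 0
  · simp only [if_pos hc, Finset.sum_const_zero]
    exact Finset.sum_nonneg fun a _ => Finset.sum_nonneg fun b _ => hw0 a b c
  · simp only [if_neg hc]
    have hsum : ∑ a, ∑ b, (∑ x, w a x c) * (∑ x, w x b c) / (∑ x, ∑ y, w x y c)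
        = ∑ x, ∑ y, w x y c := by
      have h1 : ∀ a, ∑ b, (∑ x, w a x c) * (∑ x, w x b c) / (∑ x, ∑ y, w x y c)
          = (∑ x, w a x c) * (∑ b, ∑ x, w x b c) / (∑ x, ∑ y, w x y c) := by
        intro a
        rw [Finset.mul_sum, Finset.sum_div]
      simp only [h1]
      rw [← Finset.sum_div, ← Finset.sum_mul]
      have h2 : ∑ b : B, ∑ x : A, w x b c = ∑ x, ∑ y, w x y c := Finset.sum_comm
      rw [h2]
      field_simp
    rw [hsum]

lemma ent_eq_of_comp {Ω A B C : Type*} [Fintype Ω] [DecidableEq A] [DecidableEq B] [DecidableEq C]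
    (p : Ω → ℝ) (q : Ω → A) (e1 : A → B) (e2 : A → C)
    (h1 : Function.Injective e1) (h2 : Function.Injective e2) :
    ent p (fun ω => e1 (q ω)) = ent p (fun ω => e2 (q ω)) :=
  (ent_comp p q e1 h1).trans (ent_comp p q e2 h2).symm

/-- X-marginal of a weight function on `𝒳 × 𝒴`. -/
noncomputable def margX {𝒳 𝒴 : Type*} [Fintype 𝒴] (w : 𝒳 × 𝒴 → ℝ) (x : 𝒳) : ℝ :=
  ∑ y, w (x, y)

/-- Y-marginal of a weight function on `𝒳 × 𝒴`. -/
noncomputable def margY {𝒳 𝒴 : Type*} [Fintype 𝒳] (w : 𝒳 × 𝒴 → ℝ) (y : 𝒴) : ℝ :=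
  ∑ x, w (x, y)

/-- `(Aᵢ, Bᵢ)_{i<t}` is a common partitioning for the weight `w` on `𝒳 × 𝒴`:
(i) the `Aᵢ` are pairwise disjoint and the `Bᵢ` are pairwise disjoint;
(ii) `p(Aᵢ|Bⱼ) = p(Bᵢ|Aⱼ) = δᵢⱼ`, expressed multiplicatively;
(iii) members of blocks have positive marginals. -/
def IsCommonPartition {𝒳 𝒴 : Type*} [Fintype 𝒳] [Fintype 𝒴]
    (w : 𝒳 × 𝒴 → ℝ) {t : ℕ} (A : Fin t → Finset 𝒳) (B : Fin t → Finset 𝒴) : Prop :=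
  (∀ i j, i ≠ j → Disjoint (A i) (A j) ∧ Disjoint (B i) (B j)) ∧
  (∀ i j, (∑ x ∈ A i, ∑ y ∈ B j, w (x, y)) = (if i = j then 1 else 0) * ∑ y ∈ B j, margY w y ∧
          (∑ x ∈ A j, ∑ y ∈ B i, w (x, y)) = (if i = j then 1 else 0) * ∑ x ∈ A j, margX w x) ∧
  (∀ i, ∀ x ∈ A i, ∀ y ∈ B i, 0 < margX w x ∧ 0 < margY w y)

/-- A maximal common partitioning: one of greatest length. -/
def IsMaxCommonPartition {𝒳 𝒴 : Type*} [Fintype 𝒳] [Fintype 𝒴]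
    (w : 𝒳 × 𝒴 → ℝ) {t : ℕ} (A : Fin t → Finset 𝒳) (B : Fin t → Finset 𝒴) : Prop :=
  IsCommonPartition w A B ∧
  ∀ (s : ℕ) (C : Fin s → Finset 𝒳) (D : Fin s → Finset 𝒴), IsCommonPartition w C D → s ≤ t

/-- under the Markov chain `(K,U) − X − (Y,Z)`,
`I(K:Y|U) − I(K:Z|U) = I(X:Y|Z) − I(X:Y|K,U,Z) − I(U:Y|Z) − I(K:Z|Y,U)`. -/
theorem cmi_difference_markov_identity
    {Ω κ 𝒰 𝒳 𝒴 𝒵 : Type*}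
    [Fintype Ω] [Fintype κ] [Fintype 𝒰] [Fintype 𝒳] [Fintype 𝒴] [Fintype 𝒵]
    [DecidableEq κ] [DecidableEq 𝒰] [DecidableEq 𝒳] [DecidableEq 𝒴] [DecidableEq 𝒵]
    (p : Ω → ℝ) (hp : IsProb p)
    (K : Ω → κ) (U : Ω → 𝒰) (X : Ω → 𝒳) (Y : Ω → 𝒴) (Z : Ω → 𝒵)
    (hMarkov : cmi p (fun ω => (K ω, U ω)) (fun ω => (Y ω, Z ω)) X = 0) :
    cmi p K Y U - cmi p K Z U =
      cmi p X Y Z - cmi p X Y (fun ω => (K ω, U ω, Z ω)) - cmi p U Y Z -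
        cmi p K Z (fun ω => (Y ω, U ω)) := by
  classical
  -- chain rule instance
  have i1 : ent p (fun ω => ((Y ω, Z ω), X ω)) = ent p (fun ω => (Y ω, (X ω, Z ω))) :=
    ent_eq_of_comp p (fun ω => (Y ω, Z ω, X ω))
      (fun v => ((v.1, v.2.1), v.2.2)) (fun v => (v.1, (v.2.2, v.2.1)))
      (by rintro ⟨a, b, c⟩ ⟨a', b', c'⟩ hv; simp only [Prod.mk.injEq] at hv ⊢; tauto)
      (by rintro ⟨a, b, c⟩ ⟨a', b', c'⟩ hv; simp only [Prod.mk.injEq] at hv ⊢; tauto)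
  have i2 : ent p (fun ω => (((K ω, U ω), (Y ω, Z ω)), X ω))
      = ent p (fun ω => (((K ω, U ω), Y ω), (X ω, Z ω))) :=
    ent_eq_of_comp p (fun ω => ((K ω, U ω), Y ω, Z ω, X ω))
      (fun v => ((v.1, (v.2.1, v.2.2.1)), v.2.2.2))
      (fun v => ((v.1, v.2.1), (v.2.2.2, v.2.2.1)))
      (by rintro ⟨a, b, c, d⟩ ⟨a', b', c', d'⟩ hv; simp only [Prod.mk.injEq] at hv ⊢; tauto)
      (by rintro ⟨a, b, c, d⟩ ⟨a', b', c', d'⟩ hv; simp only [Prod.mk.injEq] at hv ⊢; tauto)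
  have i3 : ent p (fun ω => (Z ω, X ω)) = ent p (fun ω => (X ω, Z ω)) :=
    ent_eq_of_comp p (fun ω => (Z ω, X ω))
      (fun v => (v.1, v.2)) (fun v => (v.2, v.1))
      (by rintro ⟨a, b⟩ ⟨a', b'⟩ hv; simp only [Prod.mk.injEq] at hv ⊢; tauto)
      (by rintro ⟨a, b⟩ ⟨a', b'⟩ hv; simp only [Prod.mk.injEq] at hv ⊢; tauto)
  have i4 : ent p (fun ω => (((K ω, U ω), Z ω), X ω))
      = ent p (fun ω => ((K ω, U ω), (X ω, Z ω))) :=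
    ent_eq_of_comp p (fun ω => ((K ω, U ω), Z ω, X ω))
      (fun v => ((v.1, v.2.1), v.2.2)) (fun v => (v.1, (v.2.2, v.2.1)))
      (by rintro ⟨a, b, c⟩ ⟨a', b', c'⟩ hv; simp only [Prod.mk.injEq] at hv ⊢; tauto)
      (by rintro ⟨a, b, c⟩ ⟨a', b', c'⟩ hv; simp only [Prod.mk.injEq] at hv ⊢; tauto)
  have hchain : cmi p (fun ω => (K ω, U ω)) (fun ω => (Y ω, Z ω)) X
      = cmi p (fun ω => (K ω, U ω)) Z X
        + cmi p (fun ω => (K ω, U ω)) Y (fun ω => (X ω, Z ω)) := by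
    simp only [cmi_eq_ent]
    linarith [i1, i2, i3, i4]
  have hn1 := cmi_nonneg p hp (fun ω => (K ω, U ω)) Z X
  have hn2 := cmi_nonneg p hp (fun ω => (K ω, U ω)) Y (fun ω => (X ω, Z ω))
  have hKY : cmi p (fun ω => (K ω, U ω)) Y (fun ω => (X ω, Z ω)) = 0 := by
    linarith [hchain, hMarkov]
  -- final identities
  have a1 : ent p (fun ω => ((K ω, Y ω), U ω)) = ent p (fun ω => (K ω, (Y ω, U ω))) :=
    ent_eq_of_comp p (fun ω => (K ω, Y ω, U ω))
      (fun v => ((v.1, v.2.1), v.2.2)) (fun v => (v.1, (v.2.1, v.2.2)))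
      (by rintro ⟨a, b, c⟩ ⟨a', b', c'⟩ hv; simp only [Prod.mk.injEq] at hv ⊢; tauto)
      (by rintro ⟨a, b, c⟩ ⟨a', b', c'⟩ hv; simp only [Prod.mk.injEq] at hv ⊢; tauto)
  have a2 : ent p (fun ω => ((K ω, Z ω), U ω)) = ent p (fun ω => (K ω, U ω, Z ω)) :=
    ent_eq_of_comp p (fun ω => (K ω, U ω, Z ω))
      (fun v => ((v.1, v.2.2), v.2.1)) (fun v => (v.1, (v.2.1, v.2.2)))
      (by rintro ⟨a, b, c⟩ ⟨a', b', c'⟩ hv; simp only [Prod.mk.injEq] at hv ⊢; tauto)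
      (by rintro ⟨a, b, c⟩ ⟨a', b', c'⟩ hv; simp only [Prod.mk.injEq] at hv ⊢; tauto)
  have a3 : ent p (fun ω => (Z ω, U ω)) = ent p (fun ω => (U ω, Z ω)) :=
    ent_eq_of_comp p (fun ω => (Z ω, U ω))
      (fun v => (v.1, v.2)) (fun v => (v.2, v.1))
      (by rintro ⟨a, b⟩ ⟨a', b'⟩ hv; simp only [Prod.mk.injEq] at hv ⊢; tauto)
      (by rintro ⟨a, b⟩ ⟨a', b'⟩ hv; simp only [Prod.mk.injEq] at hv ⊢; tauto)
  have a4 : ent p (fun ω => ((U ω, Y ω), Z ω)) = ent p (fun ω => (Z ω, (Y ω, U ω))) :=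
    ent_eq_of_comp p (fun ω => (U ω, Y ω, Z ω))
      (fun v => ((v.1, v.2.1), v.2.2)) (fun v => (v.2.2, (v.2.1, v.1)))
      (by rintro ⟨a, b, c⟩ ⟨a', b', c'⟩ hv; simp only [Prod.mk.injEq] at hv ⊢; tauto)
      (by rintro ⟨a, b, c⟩ ⟨a', b', c'⟩ hv; simp only [Prod.mk.injEq] at hv ⊢; tauto)
  have a5 : ent p (fun ω => (Y ω, (K ω, U ω, Z ω)))
      = ent p (fun ω => ((K ω, Z ω), (Y ω, U ω))) :=
    ent_eq_of_comp p (fun ω => (Y ω, K ω, U ω, Z ω))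
      (fun v => (v.1, (v.2.1, v.2.2.1, v.2.2.2)))
      (fun v => ((v.2.1, v.2.2.2), (v.1, v.2.2.1)))
      (by rintro ⟨a, b, c, d⟩ ⟨a', b', c', d'⟩ hv; simp only [Prod.mk.injEq] at hv ⊢; tauto)
      (by rintro ⟨a, b, c, d⟩ ⟨a', b', c', d'⟩ hv; simp only [Prod.mk.injEq] at hv ⊢; tauto)
  have a6 : ent p (fun ω => ((X ω, Y ω), Z ω)) = ent p (fun ω => (Y ω, (X ω, Z ω))) :=
    ent_eq_of_comp p (fun ω => (X ω, Y ω, Z ω))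
      (fun v => ((v.1, v.2.1), v.2.2)) (fun v => (v.2.1, (v.1, v.2.2)))
      (by rintro ⟨a, b, c⟩ ⟨a', b', c'⟩ hv; simp only [Prod.mk.injEq] at hv ⊢; tauto)
      (by rintro ⟨a, b, c⟩ ⟨a', b', c'⟩ hv; simp only [Prod.mk.injEq] at hv ⊢; tauto)
  have a7 : ent p (fun ω => (X ω, (K ω, U ω, Z ω)))
      = ent p (fun ω => ((K ω, U ω), (X ω, Z ω))) :=
    ent_eq_of_comp p (fun ω => (X ω, K ω, U ω, Z ω))
      (fun v => (v.1, (v.2.1, v.2.2.1, v.2.2.2)))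
      (fun v => ((v.2.1, v.2.2.1), (v.1, v.2.2.2)))
      (by rintro ⟨a, b, c, d⟩ ⟨a', b', c', d'⟩ hv; simp only [Prod.mk.injEq] at hv ⊢; tauto)
      (by rintro ⟨a, b, c, d⟩ ⟨a', b', c', d'⟩ hv; simp only [Prod.mk.injEq] at hv ⊢; tauto)
  have a8 : ent p (fun ω => ((X ω, Y ω), (K ω, U ω, Z ω)))
      = ent p (fun ω => (((K ω, U ω), Y ω), (X ω, Z ω))) :=
    ent_eq_of_comp p (fun ω => (X ω, Y ω, K ω, U ω, Z ω))
      (fun v => ((v.1, v.2.1), (v.2.2.1, v.2.2.2.1, v.2.2.2.2)))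
      (fun v => (((v.2.2.1, v.2.2.2.1), v.2.1), (v.1, v.2.2.2.2)))
      (by rintro ⟨a, b, c, d, e⟩ ⟨a', b', c', d', e'⟩ hv
          simp only [Prod.mk.injEq] at hv ⊢; tauto)
      (by rintro ⟨a, b, c, d, e⟩ ⟨a', b', c', d', e'⟩ hv
          simp only [Prod.mk.injEq] at hv ⊢; tauto)
  simp only [cmi_eq_ent] at hKY ⊢
  linarith [a1, a2, a3, a4, a5, a6, a7, a8, hKY]
end

section
/- Let p_{XYZ} be a distribution on finite 𝒳 × 𝒴 × 𝒵, and suppose there exist z₀, z₁ ∈ 𝒵 with p(z₀), p(z₁) > 0 and a function f(t) = I(X:Y) at the mixture (1−t) p_{XY|Z=z₀} + t p_{XY|Z=z₁} satisfying f(t₀) < (1 − t₀) f(0) + t₀ f(1) for some t₀ ∈ (0,1). Then there exists a channel (stochastic map) from Z to a variable Z̄ such that (X,Y) − Z − Z̄ is a Markov chain and I(X:Y|Z̄) < I(X:Y|Z); consequently the intrinsic information satisfies I(X:Y↓Z) < I(X:Y|Z). -/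
open Finset Set

/-- Mutual information of a joint distribution on `𝒳 × 𝒴`. -/
noncomputable def mutInfo {𝒳 𝒴 : Type*} [Fintype 𝒳] [Fintype 𝒴] (q : 𝒳 × 𝒴 → ℝ) : ℝ :=
  ∑ x, ∑ y, q (x, y) * Real.log (q (x, y) / (margX q x * margY q y))

/-- Entropy of a distribution on a finite type. -/
noncomputable def ent1 {A : Type*} [Fintype A] (d : A → ℝ) : ℝ :=
  ∑ a, Real.negMulLog (d a)

/-- Conditional mutual information `I(X:Y|Z)` of a joint distribution on `𝒳 × 𝒴 × 𝒵`. -/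
noncomputable def cmi3 {𝒳 𝒴 𝒵 : Type*} [Fintype 𝒳] [Fintype 𝒴] [Fintype 𝒵]
    (q : 𝒳 × 𝒴 × 𝒵 → ℝ) : ℝ :=
  ent1 (fun xz : 𝒳 × 𝒵 => ∑ y, q (xz.1, y, xz.2)) +
    ent1 (fun yz : 𝒴 × 𝒵 => ∑ x, q (x, yz.1, yz.2)) -
    ent1 q - ent1 (fun z : 𝒵 => ∑ x, ∑ y, q (x, y, z))

/-- A channel (stochastic matrix) from `𝒵` to `𝒵`. -/
def IsChannel {𝒵 : Type*} [Fintype 𝒵] (c : 𝒵 → 𝒵 → ℝ) : Prop :=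
  (∀ z z', 0 ≤ c z z') ∧ ∀ z, ∑ z', c z z' = 1

/-- The joint distribution of `(X,Y,Z̄)` induced by applying a channel to `Z`. -/
noncomputable def applyChannel {𝒳 𝒴 𝒵 : Type*} [Fintype 𝒵]
    (q : 𝒳 × 𝒴 × 𝒵 → ℝ) (c : 𝒵 → 𝒵 → ℝ) : 𝒳 × 𝒴 × 𝒵 → ℝ :=
  fun a => ∑ z, q (a.1, a.2.1, z) * c z a.2.2

noncomputable def Mfun {𝒳 𝒴 : Type*} [Fintype 𝒳] [Fintype 𝒴] (w : 𝒳 × 𝒴 → ℝ) : ℝ :=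
  ∑ x, ∑ y, w (x, y) * Real.log (w (x, y) * (∑ a, ∑ b, w (a, b)) / (margX w x * margY w y))

lemma log_split4 {q A B S : ℝ} (hq : 0 ≤ q) (hA : q ≤ A) (hB : q ≤ B) (hS : q ≤ S) :
    q * Real.log (q * S / (A * B)) =
      q * Real.log q + q * Real.log S - q * Real.log A - q * Real.log B := by
  rcases hq.eq_or_lt with h | h
  · simp [← h]
  · have hA' : (0:ℝ) < A := h.trans_le hA
    have hB' : (0:ℝ) < B := h.trans_le hB
    have hS' : (0:ℝ) < S := h.trans_le hS
    rw [Real.log_div (by positivity) (by positivity), Real.log_mul h.ne' hS'.ne',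
      Real.log_mul hA'.ne' hB'.ne']
    ring

lemma sum3_comm {𝒳 𝒴 𝒵 : Type*} [Fintype 𝒳] [Fintype 𝒴] [Fintype 𝒵]
    (g : 𝒳 → 𝒴 → 𝒵 → ℝ) :
    ∑ x, ∑ y, ∑ z, g x y z = ∑ z, ∑ x, ∑ y, g x y z :=
  calc ∑ x, ∑ y, ∑ z, g x y z = ∑ x, ∑ z, ∑ y, g x y z :=
        Finset.sum_congr rfl fun x _ => Finset.sum_comm
    _ = ∑ z, ∑ x, ∑ y, g x y z := Finset.sum_comm

lemma cmi3_eq_sum_Mfun {𝒳 𝒴 𝒵 : Type*} [Fintype 𝒳] [Fintype 𝒴] [Fintype 𝒵]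
    (q : 𝒳 × 𝒴 × 𝒵 → ℝ) (hq : ∀ a, 0 ≤ q a) :
    cmi3 q = ∑ z, Mfun (fun a : 𝒳 × 𝒴 => q (a.1, a.2, z)) := by
  classical
  have key : ∀ z : 𝒵, Mfun (fun a : 𝒳 × 𝒴 => q (a.1, a.2, z)) =
      (∑ x, ∑ y, q (x,y,z) * Real.log (q (x,y,z)))
      + (∑ x, ∑ y, q (x,y,z)) * Real.log (∑ x, ∑ y, q (x,y,z))
      - (∑ x, (∑ y, q (x,y,z)) * Real.log (∑ y, q (x,y,z)))
      - (∑ y, (∑ x, q (x,y,z)) * Real.log (∑ x, q (x,y,z))) := by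
    intro z
    have hB : ∑ x, ∑ y, q (x,y,z) * Real.log (∑ x', q (x',y,z)) =
        ∑ y, (∑ x, q (x,y,z)) * Real.log (∑ x, q (x,y,z)) := by
      rw [Finset.sum_comm]
      exact Finset.sum_congr rfl fun y _ => (Finset.sum_mul _ _ _).symm
    have hsplit : ∀ x y, q (x,y,z) * Real.log
        (q (x,y,z) * (∑ a, ∑ b, q (a,b,z)) / ((∑ y', q (x,y',z)) * (∑ x', q (x',y,z)))) =
        q (x,y,z) * Real.log (q (x,y,z)) + q (x,y,z) * Real.log (∑ a, ∑ b, q (a,b,z))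
        - q (x,y,z) * Real.log (∑ y', q (x,y',z)) - q (x,y,z) * Real.log (∑ x', q (x',y,z)) := by
      intro x y
      refine log_split4 (hq _) ?_ ?_ ?_
      · exact Finset.single_le_sum (f := fun y' => q (x, y', z)) (fun i _ => hq _)
          (Finset.mem_univ y)
      · exact Finset.single_le_sum (f := fun x' => q (x', y, z)) (fun i _ => hq _)
          (Finset.mem_univ x)
      · exact le_trans (Finset.single_le_sum (f := fun y' => q (x, y', z)) (fun i _ => hq _)
            (Finset.mem_univ y))
          (Finset.single_le_sum (f := fun a => ∑ b, q (a, b, z))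
            (fun i _ => Finset.sum_nonneg fun j _ => hq _) (Finset.mem_univ x))
    unfold Mfun margX margY
    simp only [hsplit]
    simp only [Finset.sum_sub_distrib, Finset.sum_add_distrib, ← Finset.sum_mul]
    rw [hB]
  rw [Finset.sum_congr rfl fun z _ => key z]
  unfold cmi3 ent1
  simp only [Real.negMulLog, Fintype.sum_prod_type, neg_mul]
  rw [Finset.sum_sub_distrib, Finset.sum_sub_distrib, Finset.sum_add_distrib]
  simp only [Finset.sum_neg_distrib]
  have hA : ∑ x : 𝒳, ∑ z : 𝒵, (∑ y, q (x,y,z)) * Real.log (∑ y, q (x,y,z))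
      = ∑ z, ∑ x, (∑ y, q (x,y,z)) * Real.log (∑ y, q (x,y,z)) := Finset.sum_comm
  have hBB : ∑ y : 𝒴, ∑ z : 𝒵, (∑ x, q (x,y,z)) * Real.log (∑ x, q (x,y,z))
      = ∑ z, ∑ y, (∑ x, q (x,y,z)) * Real.log (∑ x, q (x,y,z)) := Finset.sum_comm
  have hq3 : ∑ x, ∑ y, ∑ z, q (x,y,z) * Real.log (q (x,y,z))
      = ∑ z, ∑ x, ∑ y, q (x,y,z) * Real.log (q (x,y,z)) := sum3_comm _
  rw [hA, hBB, hq3]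
  ring

lemma Mfun_smul {𝒳 𝒴 : Type*} [Fintype 𝒳] [Fintype 𝒴] (w : 𝒳 × 𝒴 → ℝ) {c : ℝ} (hc : 0 ≤ c) :
    Mfun (fun a => c * w a) = c * Mfun w := by
  rcases hc.eq_or_lt with h | h
  · simp [Mfun, ← h]
  · unfold Mfun margX margY
    rw [Finset.mul_sum]
    refine Finset.sum_congr rfl fun x _ => ?_
    rw [Finset.mul_sum]
    refine Finset.sum_congr rfl fun y _ => ?_
    have h1 : ∀ u v s : ℝ, (c * u) * (c * s) / ((c * v) * (c * w (x, y))) =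
        u * s / (v * w (x, y)) := by
      intro u v s
      rw [show (c * u) * (c * s) = (c * c) * (u * s) by ring,
        show (c * v) * (c * w (x, y)) = (c * c) * (v * w (x, y)) by ring]
      exact mul_div_mul_left _ _ (by positivity)
    simp only [← Finset.mul_sum]
    rw [show c * w (x, y) * (c * ∑ a, ∑ b, w (a, b)) /
        ((c * ∑ y', w (x, y')) * (c * ∑ x', w (x', y))) =
        w (x, y) * (∑ a, ∑ b, w (a, b)) / ((∑ y', w (x, y')) * (∑ x', w (x', y))) from ?_]
    · ring
    · rw [show c * w (x, y) * (c * ∑ a, ∑ b, w (a, b)) =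
          (c * c) * (w (x, y) * ∑ a, ∑ b, w (a, b)) by ring,
        show (c * ∑ y', w (x, y')) * (c * ∑ x', w (x', y)) =
          (c * c) * ((∑ y', w (x, y')) * (∑ x', w (x', y))) by ring]
      exact mul_div_mul_left _ _ (by positivity)

lemma Mfun_of_isProb {𝒳 𝒴 : Type*} [Fintype 𝒳] [Fintype 𝒴] {q : 𝒳 × 𝒴 → ℝ}
    (hq : IsProb q) : Mfun q = mutInfo q := by
  have hs : ∑ a : 𝒳, ∑ b : 𝒴, q (a, b) = 1 := by
    rw [← Fintype.sum_prod_type]; exact hq.2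
  unfold Mfun mutInfo
  rw [hs]
  simp [mul_one]

lemma mutInfo_nonneg {𝒳 𝒴 : Type*} [Fintype 𝒳] [Fintype 𝒴] {q : 𝒳 × 𝒴 → ℝ}
    (hq : IsProb q) : 0 ≤ mutInfo q := by
  have hsum : ∑ x, ∑ y, q (x, y) = 1 := by rw [← Fintype.sum_prod_type]; exact hq.2
  have key : ∀ x y, q (x, y) - margX q x * margY q y ≤
      q (x, y) * Real.log (q (x, y) / (margX q x * margY q y)) := by
    intro x y
    have ha : q (x, y) ≤ margX q x :=
      Finset.single_le_sum (f := fun y' => q (x, y')) (fun i _ => hq.1 _) (Finset.mem_univ y)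
    have hb : q (x, y) ≤ margY q y :=
      Finset.single_le_sum (f := fun x' => q (x', y)) (fun i _ => hq.1 _) (Finset.mem_univ x)
    have ha0 : 0 ≤ margX q x := le_trans (hq.1 _) ha
    have hb0 : 0 ≤ margY q y := le_trans (hq.1 _) hb
    rcases (hq.1 (x, y)).eq_or_lt with h | h
    · rw [← h]; simp; positivity
    · have ha' : (0:ℝ) < margX q x := h.trans_le ha
      have hb' : (0:ℝ) < margY q y := h.trans_le hb
      have hlog : Real.log ((margX q x * margY q y) / q (x, y)) ≤
          (margX q x * margY q y) / q (x, y) - 1 :=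
        Real.log_le_sub_one_of_pos (by positivity)
      have h2 : q (x, y) * Real.log ((margX q x * margY q y) / q (x, y)) ≤
          q (x, y) * ((margX q x * margY q y) / q (x, y) - 1) :=
        mul_le_mul_of_nonneg_left hlog h.le
      have h3 : q (x, y) * ((margX q x * margY q y) / q (x, y) - 1) =
          margX q x * margY q y - q (x, y) := by field_simp
      rw [Real.log_div (by positivity) h.ne'] at h2
      rw [Real.log_div h.ne' (by positivity : margX q x * margY q y ≠ 0)]
      nlinarith [h2, h3]
  have h1 : ∑ x, ∑ y, (q (x, y) - margX q x * margY q y) ≤ mutInfo q := by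
    unfold mutInfo
    exact Finset.sum_le_sum fun x _ => Finset.sum_le_sum fun y _ => key x y
  have h2 : ∑ x, ∑ y, (q (x, y) - margX q x * margY q y) = 0 := by
    have hmx : ∑ x, margX q x = 1 := by
      unfold margX; rw [← Fintype.sum_prod_type]; exact hq.2
    have hmy : ∑ y, margY q y = 1 := by
      unfold margY; rw [Finset.sum_comm, ← Fintype.sum_prod_type]; exact hq.2
    simp only [Finset.sum_sub_distrib]
    rw [hsum]
    have : ∑ x, ∑ y, margX q x * margY q y = (∑ x, margX q x) * (∑ y, margY q y) := by
      rw [Finset.sum_mul]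
      exact Finset.sum_congr rfl fun x _ => (Finset.mul_sum _ _ _).symm
    rw [this, hmx, hmy]; ring
  linarith

lemma Mfun_nonneg {𝒳 𝒴 : Type*} [Fintype 𝒳] [Fintype 𝒴] {w : 𝒳 × 𝒴 → ℝ}
    (hw : ∀ a, 0 ≤ w a) : 0 ≤ Mfun w := by
  set S : ℝ := ∑ a : 𝒳, ∑ b : 𝒴, w (a, b) with hS
  have hS0 : 0 ≤ S := Finset.sum_nonneg fun a _ => Finset.sum_nonneg fun b _ => hw _
  rcases hS0.eq_or_lt with h | h
  · have hz : ∀ a : 𝒳 × 𝒴, w a = 0 := by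
      intro a
      have h1 : ∑ c : 𝒳 × 𝒴, w c = 0 := by
        rw [Fintype.sum_prod_type, ← hS, ← h]
      have := (Finset.sum_eq_zero_iff_of_nonneg (fun c _ => hw c)).mp h1
      exact this a (Finset.mem_univ a)
    have : Mfun w = 0 := by
      unfold Mfun
      refine Finset.sum_eq_zero fun x _ => Finset.sum_eq_zero fun y _ => ?_
      rw [hz (x, y)]; ring
    linarith
  · set q : 𝒳 × 𝒴 → ℝ := fun a => w a / S with hqdef
    have hq : IsProb q := by
      constructor
      · intro a; exact div_nonneg (hw a) hS0
      · rw [hqdef]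
        simp only
        rw [← Finset.sum_div, Fintype.sum_prod_type, ← hS, div_self h.ne']
    have hwq : w = fun a => S * q a := by
      funext a; rw [hqdef]; field_simp
    calc (0:ℝ) ≤ S * mutInfo q := mul_nonneg hS0 (mutInfo_nonneg hq)
      _ = S * Mfun q := by rw [Mfun_of_isProb hq]
      _ = Mfun (fun a => S * q a) := (Mfun_smul q hS0).symm
      _ = Mfun w := by rw [← hwq]

noncomputable def mixChan {𝒵 : Type*} [DecidableEq 𝒵] (za zb : 𝒵) (δ : ℝ) : 𝒵 → 𝒵 → ℝ :=
  fun z z' => if z = zb then (if z' = za then δ else if z' = zb then 1 - δ else 0)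
    else (if z' = z then 1 else 0)

lemma isChannel_mixChan {𝒵 : Type*} [Fintype 𝒵] [DecidableEq 𝒵] {za zb : 𝒵} (hne : za ≠ zb)
    {δ : ℝ} (h0 : 0 ≤ δ) (h1 : δ ≤ 1) : IsChannel (mixChan za zb δ) := by
  constructor
  · intro z z'
    unfold mixChan
    split_ifs <;> linarith
  · intro z
    unfold mixChan
    by_cases hz : z = zb
    · simp only [hz, if_pos rfl, if_true, eq_self_iff_true]
      have he : ∀ z' : 𝒵, (if z' = za then δ else if z' = zb then 1 - δ else 0) =
          (if z' = za then δ else 0) + (if z' = zb then 1 - δ else 0) := by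
        intro z'
        by_cases h : z' = za
        · have hnb : z' ≠ zb := h ▸ hne
          simp [h, hnb, hne]
        · simp [h]
      calc (∑ z' : 𝒵, if z' = za then δ else if z' = zb then 1 - δ else 0)
          = ∑ z' : 𝒵, ((if z' = za then δ else 0) + (if z' = zb then 1 - δ else 0)) :=
            Finset.sum_congr rfl fun z' _ => he z'
        _ = 1 := by
            rw [Finset.sum_add_distrib, Finset.sum_ite_eq' Finset.univ za (fun _ => δ),
              Finset.sum_ite_eq' Finset.univ zb (fun _ => 1 - δ)]
            simp
    · simp only [hz, if_false, if_neg hz]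
      rw [Finset.sum_ite_eq' Finset.univ z (fun _ => (1:ℝ))]
      simp

lemma slice_mixChan {𝒳 𝒴 𝒵 : Type*} [Fintype 𝒵] [DecidableEq 𝒵]
    (p : 𝒳 × 𝒴 × 𝒵 → ℝ) (za zb : 𝒵) (δ : ℝ) (x : 𝒳) (y : 𝒴) (z' : 𝒵) :
    applyChannel p (mixChan za zb δ) (x, y, z') =
      p (x, y, zb) * mixChan za zb δ zb z' + (if z' = zb then 0 else p (x, y, z')) := by
  show (∑ z, p (x, y, z) * mixChan za zb δ z z') = _
  rw [← Finset.add_sum_erase Finset.univ (fun z => p (x, y, z) * mixChan za zb δ z z')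
    (Finset.mem_univ zb)]
  congr 1
  have he : ∀ z ∈ Finset.univ.erase zb,
      p (x, y, z) * mixChan za zb δ z z' = if z' = z then p (x, y, z) else 0 := by
    intro z hzz
    have hz : z ≠ zb := Finset.ne_of_mem_erase hzz
    unfold mixChan
    rw [if_neg hz]
    by_cases h : z' = z <;> simp [h]
  rw [Finset.sum_congr rfl he, Finset.sum_ite_eq]
  by_cases h : z' = zb
  · simp [h]
  · simp [h, Finset.mem_erase]

lemma cmi3_mixChan {𝒳 𝒴 𝒵 : Type*} [Fintype 𝒳] [Fintype 𝒴] [Fintype 𝒵] [DecidableEq 𝒵]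
    (p : 𝒳 × 𝒴 × 𝒵 → ℝ) (hp : ∀ a, 0 ≤ p a) {za zb : 𝒵} (hne : za ≠ zb)
    {δ : ℝ} (h0 : 0 ≤ δ) (h1 : δ ≤ 1) :
    cmi3 (applyChannel p (mixChan za zb δ)) - cmi3 p =
      Mfun (fun a : 𝒳 × 𝒴 => p (a.1, a.2, za) + δ * p (a.1, a.2, zb)) -
        Mfun (fun a : 𝒳 × 𝒴 => p (a.1, a.2, za)) -
        δ * Mfun (fun a : 𝒳 × 𝒴 => p (a.1, a.2, zb)) := by
  have hch := isChannel_mixChan hne h0 h1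
  have hp' : ∀ a, 0 ≤ applyChannel p (mixChan za zb δ) a := by
    intro a
    exact Finset.sum_nonneg fun z _ => mul_nonneg (hp _) (hch.1 _ _)
  rw [cmi3_eq_sum_Mfun _ hp', cmi3_eq_sum_Mfun p hp, ← Finset.sum_sub_distrib]
  have hvanish : ∀ z ∈ Finset.univ, z ∉ ({za, zb} : Finset 𝒵) →
      (Mfun (fun a : 𝒳 × 𝒴 => applyChannel p (mixChan za zb δ) (a.1, a.2, z)) -
        Mfun (fun a : 𝒳 × 𝒴 => p (a.1, a.2, z))) = 0 := by
    intro z _ hz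
    simp only [Finset.mem_insert, Finset.mem_singleton, not_or] at hz
    have hslice : (fun a : 𝒳 × 𝒴 => applyChannel p (mixChan za zb δ) (a.1, a.2, z)) =
        (fun a : 𝒳 × 𝒴 => p (a.1, a.2, z)) := by
      funext a
      rw [slice_mixChan]
      unfold mixChan
      simp [hz.1, hz.2, Ne.symm hz.1, Ne.symm hz.2]
    rw [hslice, sub_self]
  rw [← Finset.sum_subset (Finset.subset_univ ({za, zb} : Finset 𝒵)) hvanish,
    Finset.sum_pair hne]
  have ha : (fun a : 𝒳 × 𝒴 => applyChannel p (mixChan za zb δ) (a.1, a.2, za)) =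
      (fun a : 𝒳 × 𝒴 => p (a.1, a.2, za) + δ * p (a.1, a.2, zb)) := by
    funext a
    rw [slice_mixChan]
    unfold mixChan
    simp [hne, Ne.symm hne]
    ring
  have hb : (fun a : 𝒳 × 𝒴 => applyChannel p (mixChan za zb δ) (a.1, a.2, zb)) =
      (fun a : 𝒳 × 𝒴 => (1 - δ) * p (a.1, a.2, zb)) := by
    funext a
    rw [slice_mixChan]
    unfold mixChan
    simp [Ne.symm hne]
    ring
  rw [ha, hb, Mfun_smul _ (by linarith : (0:ℝ) ≤ 1 - δ)]
  ring

lemma cmi3_applyChannel_nonneg {𝒳 𝒴 𝒵 : Type*} [Fintype 𝒳] [Fintype 𝒴] [Fintype 𝒵]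
    (p : 𝒳 × 𝒴 × 𝒵 → ℝ) (hp : ∀ a, 0 ≤ p a) (c : 𝒵 → 𝒵 → ℝ) (hc : IsChannel c) :
    0 ≤ cmi3 (applyChannel p c) := by
  have hp' : ∀ a, 0 ≤ applyChannel p c a := by
    intro a
    exact Finset.sum_nonneg fun z _ => mul_nonneg (hp _) (hc.1 _ _)
  rw [cmi3_eq_sum_Mfun _ hp']
  exact Finset.sum_nonneg fun z _ => Mfun_nonneg (fun a => hp' _)

/-- if the mutual information of the mixture of two conditional distributions
of `p` dips below the chord, then there is a channel `Z̄|Z` (giving a Markov chain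
`(X,Y) − Z − Z̄`) with `I(X:Y|Z̄) < I(X:Y|Z)`; consequently `I(X:Y↓Z) < I(X:Y|Z)`. -/
theorem channel_strictly_lowers_cmi
    {𝒳 𝒴 𝒵 : Type*} [Fintype 𝒳] [Fintype 𝒴] [Fintype 𝒵]
    (p : 𝒳 × 𝒴 × 𝒵 → ℝ) (hp : IsProb p)
    (z₀ z₁ : 𝒵)
    (hz₀ : 0 < ∑ x, ∑ y, p (x, y, z₀)) (hz₁ : 0 < ∑ x, ∑ y, p (x, y, z₁))
    (t₀ : ℝ) (ht₀ : t₀ ∈ Ioo (0 : ℝ) 1)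
    (f : ℝ → ℝ)
    (hf : f = fun t => mutInfo (fun a : 𝒳 × 𝒴 =>
      (1 - t) * (p (a.1, a.2, z₀) / ∑ x, ∑ y, p (x, y, z₀)) +
        t * (p (a.1, a.2, z₁) / ∑ x, ∑ y, p (x, y, z₁))))
    (hchord : f t₀ < (1 - t₀) * f 0 + t₀ * f 1) :
    (∃ c : 𝒵 → 𝒵 → ℝ, IsChannel c ∧ cmi3 (applyChannel p c) < cmi3 p) ∧
      sInf {m : ℝ | ∃ c : 𝒵 → 𝒵 → ℝ, IsChannel c ∧ m = cmi3 (applyChannel p c)} <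
        cmi3 p := by
  classical
  obtain ⟨ht0, ht1⟩ := ht₀
  have ht1' : (0:ℝ) < 1 - t₀ := by linarith
  set s₀ : ℝ := ∑ x, ∑ y, p (x, y, z₀) with hs₀
  set s₁ : ℝ := ∑ x, ∑ y, p (x, y, z₁) with hs₁
  have hpn := hp.1
  -- first: the two slice points must be distinct
  have hne : z₀ ≠ z₁ := by
    intro h
    subst h
    have hs10 : s₁ = s₀ := hs₁.trans hs₀.symm
    have hconst : ∀ t : ℝ, f t = f 0 := by
      intro t
      rw [hf]
      show mutInfo _ = mutInfo _
      apply congrArg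
      funext a
      rw [hs10]
      ring
    rw [hconst t₀, hconst 1] at hchord
    linarith
  have hft : ∀ t : ℝ, f t = mutInfo (fun a : 𝒳 × 𝒴 =>
      (1 - t) * (p (a.1, a.2, z₀) / s₀) + t * (p (a.1, a.2, z₁) / s₁)) := by
    intro t; rw [hf]
  have hsum0 : ∑ a : 𝒳 × 𝒴, p (a.1, a.2, z₀) / s₀ = 1 := by
    rw [Fintype.sum_prod_type]
    simp only [← Finset.sum_div]
    rw [← hs₀, div_self hz₀.ne']
  have hsum1 : ∑ a : 𝒳 × 𝒴, p (a.1, a.2, z₁) / s₁ = 1 := by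
    rw [Fintype.sum_prod_type]
    simp only [← Finset.sum_div]
    rw [← hs₁, div_self hz₁.ne']
  have hq₀p : IsProb (fun a : 𝒳 × 𝒴 => p (a.1, a.2, z₀) / s₀) :=
    ⟨fun a => div_nonneg (hpn _) hz₀.le, hsum0⟩
  have hq₁p : IsProb (fun a : 𝒳 × 𝒴 => p (a.1, a.2, z₁) / s₁) :=
    ⟨fun a => div_nonneg (hpn _) hz₁.le, hsum1⟩
  have hmixp : IsProb (fun a : 𝒳 × 𝒴 =>
      (1 - t₀) * (p (a.1, a.2, z₀) / s₀) + t₀ * (p (a.1, a.2, z₁) / s₁)) := by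
    constructor
    · intro a
      have := div_nonneg (hpn (a.1, a.2, z₀)) hz₀.le
      have := div_nonneg (hpn (a.1, a.2, z₁)) hz₁.le
      nlinarith
    · rw [Finset.sum_add_distrib, ← Finset.mul_sum, ← Finset.mul_sum, hsum0, hsum1]
      ring
  have hf0 : f 0 = mutInfo (fun a : 𝒳 × 𝒴 => p (a.1, a.2, z₀) / s₀) := by
    rw [hft 0]; congr 1; funext a; ring
  have hf1 : f 1 = mutInfo (fun a : 𝒳 × 𝒴 => p (a.1, a.2, z₁) / s₁) := by
    rw [hft 1]; congr 1; funext a; ring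
  have hM0 : Mfun (fun a : 𝒳 × 𝒴 => p (a.1, a.2, z₀)) = s₀ * f 0 := by
    have hpa : (fun a : 𝒳 × 𝒴 => p (a.1, a.2, z₀)) =
        fun a : 𝒳 × 𝒴 => s₀ * (p (a.1, a.2, z₀) / s₀) := by
      funext a; field_simp
    rw [hpa, Mfun_smul _ hz₀.le, Mfun_of_isProb hq₀p, hf0]
  have hM1 : Mfun (fun a : 𝒳 × 𝒴 => p (a.1, a.2, z₁)) = s₁ * f 1 := by
    have hpb : (fun a : 𝒳 × 𝒴 => p (a.1, a.2, z₁)) =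
        fun a : 𝒳 × 𝒴 => s₁ * (p (a.1, a.2, z₁) / s₁) := by
      funext a; field_simp
    rw [hpb, Mfun_smul _ hz₁.le, Mfun_of_isProb hq₁p, hf1]
  -- construct the channel, case split on which direction of mixing is feasible
  have main : ∃ c : 𝒵 → 𝒵 → ℝ, IsChannel c ∧ cmi3 (applyChannel p c) < cmi3 p := by
    by_cases hc : t₀ * s₀ ≤ (1 - t₀) * s₁
    · -- mix z₁ into z₀
      set δ : ℝ := t₀ * s₀ / ((1 - t₀) * s₁) with hδ
      have hδ0 : 0 < δ := div_pos (by positivity) (by positivity)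
      have hδ1 : δ ≤ 1 := (div_le_one (by positivity)).mpr hc
      set S : ℝ := s₀ + δ * s₁ with hSdef
      have hS : 0 < S := by positivity
      have h1 : S * (1 - t₀) = s₀ := by
        rw [hSdef, hδ]
        field_simp
        ring
      have h2 : S * t₀ = δ * s₁ := by
        rw [hSdef, hδ]
        field_simp
        ring
      refine ⟨mixChan z₀ z₁ δ, isChannel_mixChan hne hδ0.le hδ1, ?_⟩
      have hkey := cmi3_mixChan p hpn hne hδ0.le hδ1
      have hfun : (fun a : 𝒳 × 𝒴 => p (a.1, a.2, z₀) + δ * p (a.1, a.2, z₁)) =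
          fun a : 𝒳 × 𝒴 => S * ((1 - t₀) * (p (a.1, a.2, z₀) / s₀) +
            t₀ * (p (a.1, a.2, z₁) / s₁)) := by
        funext a
        have e1 : S * ((1 - t₀) * (p (a.1, a.2, z₀) / s₀) + t₀ * (p (a.1, a.2, z₁) / s₁)) =
            (S * (1 - t₀)) * (p (a.1, a.2, z₀) / s₀) + (S * t₀) * (p (a.1, a.2, z₁) / s₁) := by
          ring
        rw [e1, h1, h2]
        field_simp
      have hMmix : Mfun (fun a : 𝒳 × 𝒴 => p (a.1, a.2, z₀) + δ * p (a.1, a.2, z₁)) =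
          S * f t₀ := by
        rw [hfun, Mfun_smul _ hS.le, Mfun_of_isProb hmixp, hft t₀]
      have hlt : S * f t₀ < s₀ * f 0 + δ * (s₁ * f 1) := by
        calc S * f t₀ < S * ((1 - t₀) * f 0 + t₀ * f 1) :=
              mul_lt_mul_of_pos_left hchord hS
          _ = (S * (1 - t₀)) * f 0 + (S * t₀) * f 1 := by ring
          _ = s₀ * f 0 + δ * (s₁ * f 1) := by rw [h1, h2]; ring
      rw [hM0, hM1, hMmix] at hkey
      linarith
    · -- mix z₀ into z₁
      push_neg at hc
      set δ : ℝ := (1 - t₀) * s₁ / (t₀ * s₀) with hδ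
      have hδ0 : 0 < δ := div_pos (by positivity) (by positivity)
      have hδ1 : δ ≤ 1 := le_of_lt ((div_lt_one (by positivity)).mpr hc)
      set S : ℝ := s₁ + δ * s₀ with hSdef
      have hS : 0 < S := by positivity
      have h1 : S * (1 - t₀) = δ * s₀ := by
        rw [hSdef, hδ]
        field_simp
        ring
      have h2 : S * t₀ = s₁ := by
        rw [hSdef, hδ]
        field_simp
        ring
      refine ⟨mixChan z₁ z₀ δ, isChannel_mixChan hne.symm hδ0.le hδ1, ?_⟩
      have hkey := cmi3_mixChan p hpn hne.symm hδ0.le hδ1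
      have hfun : (fun a : 𝒳 × 𝒴 => p (a.1, a.2, z₁) + δ * p (a.1, a.2, z₀)) =
          fun a : 𝒳 × 𝒴 => S * ((1 - t₀) * (p (a.1, a.2, z₀) / s₀) +
            t₀ * (p (a.1, a.2, z₁) / s₁)) := by
        funext a
        have e1 : S * ((1 - t₀) * (p (a.1, a.2, z₀) / s₀) + t₀ * (p (a.1, a.2, z₁) / s₁)) =
            (S * (1 - t₀)) * (p (a.1, a.2, z₀) / s₀) + (S * t₀) * (p (a.1, a.2, z₁) / s₁) := by
          ring
        rw [e1, h1, h2]
        field_simp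
        ring
      have hMmix : Mfun (fun a : 𝒳 × 𝒴 => p (a.1, a.2, z₁) + δ * p (a.1, a.2, z₀)) =
          S * f t₀ := by
        rw [hfun, Mfun_smul _ hS.le, Mfun_of_isProb hmixp, hft t₀]
      have hlt : S * f t₀ < s₁ * f 1 + δ * (s₀ * f 0) := by
        calc S * f t₀ < S * ((1 - t₀) * f 0 + t₀ * f 1) :=
              mul_lt_mul_of_pos_left hchord hS
          _ = (S * (1 - t₀)) * f 0 + (S * t₀) * f 1 := by ring
          _ = s₁ * f 1 + δ * (s₀ * f 0) := by rw [h1, h2]; ring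
      rw [hM0, hM1, hMmix] at hkey
      linarith
  obtain ⟨c, hch, hlt⟩ := main
  refine ⟨⟨c, hch, hlt⟩, ?_⟩
  have hbdd : BddBelow {m : ℝ | ∃ c : 𝒵 → 𝒵 → ℝ, IsChannel c ∧ m = cmi3 (applyChannel p c)} := by
    refine ⟨0, fun m hm => ?_⟩
    obtain ⟨c', hc', rfl⟩ := hm
    exact cmi3_applyChannel_nonneg p hpn c' hc'
  have hmem : cmi3 (applyChannel p c) ∈
      {m : ℝ | ∃ c : 𝒵 → 𝒵 → ℝ, IsChannel c ∧ m = cmi3 (applyChannel p c)} := ⟨c, hch, rfl⟩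
  exact lt_of_le_of_lt (csInf_le hbdd hmem) hlt
end

section
/- Let p_{XYZ} be such that p_{XY|Z=z'} is perfectly correlated (p(x,y|z') = p(x|z') δ_{x,y} after relabeling) for some z', and p_{XY|Z=z} is a product distribution for some z ≠ z', with supp[p_{X|Z=z}] ⊆ supp[p_{X|Z=z'}] or supp[p_{Y|Z=z}] ⊆ supp[p_{Y|Z=z'}]. If there exists (x,y) with p(x,y|z) > 0 and p(x|z') p(y|z') > 0 but p(x,y|z') = 0, then the intrinsic information satisfies I(X:Y↓Z) < I(X:Y|Z). -/
open Finset Set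

/-!
Let a fraction `ε` of the mass of the symbol `z` leak into `z'`. As `I(X:Y|Z) = ∑ᵤ p(u) I(X:Y|Z=u)`
and the product slice `z` contributes nothing before and after being scaled by `1 - ε`, the
change of `I(X:Y|Z)` is the change of `p(z') I(X:Y|Z=z')` when the slice `p(·,·,z')` becomes
`p(·,·,z') + ε p(·,·,z)`. By the support inclusion the row entropies grow by `O(ε)`; by the
subadditivity of `t ↦ -t log t` so does each column entropy minus the entropies of its cells,
except that the cell `(x, y)`, where `p(·,·,z')` vanishes, gains `-p(x,y,z) ε log ε`. So the change
is negative for small `ε`. The infimum is finite because the channels form a compact set.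
-/

open Real

namespace Real

lemma negMulLog_sum_le_sum_negMulLog {ι : Type*} (s : Finset ι) {f : ι → ℝ}
    (hf : ∀ i ∈ s, 0 ≤ f i) : negMulLog (∑ i ∈ s, f i) ≤ ∑ i ∈ s, negMulLog (f i) := by
  rw [negMulLog, neg_mul, Finset.sum_mul, ← Finset.sum_neg_distrib]
  refine Finset.sum_le_sum fun i hi => ?_
  rcases (hf i hi).eq_or_lt with hfi | hfi
  · simp [← hfi]
  · have := log_le_log hfi (Finset.single_le_sum hf hi)
    rw [negMulLog]
    nlinarith

lemma negMulLog_add_sub_le {a c : ℝ} (ha : 0 < a) (hc : 0 ≤ c) :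
    negMulLog (a + c) - negMulLog a ≤ c * |log a| := by
  have hlog : log a ≤ log (a + c) := log_le_log ha (by linarith)
  have h₁ := mul_le_mul_of_nonneg_left hlog hc
  have h₂ := mul_le_mul_of_nonneg_left hlog ha.le
  have h₃ := mul_le_mul_of_nonneg_left (neg_le_abs (log a)) hc
  simp only [negMulLog]
  linarith

lemma neg_le_negMulLog_add_sub {a c : ℝ} (ha : 0 ≤ a) (hc : 0 ≤ c) :
    -(c * (1 + log (a + c))) ≤ negMulLog (a + c) - negMulLog a := by
  have hmul_log : a * (log (a + c) - log a) ≤ c := by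
    rcases ha.eq_or_lt with rfl | ha
    · simpa using hc
    have h := log_le_sub_one_of_pos (x := (a + c) / a) (by positivity)
    rw [log_div (by positivity) ha.ne'] at h
    calc a * (log (a + c) - log a) ≤ a * ((a + c) / a - 1) :=
          mul_le_mul_of_nonneg_left h ha.le
      _ = c := by field_simp; ring
  simp only [negMulLog]
  linarith

lemma neg_mul_le_negMulLog_add_mul_sub {a b ε : ℝ} (ha : 0 ≤ a) (hb : 0 ≤ b) (hε : 0 ≤ ε)
    (hε₁ : ε ≤ 1) :
    -(ε * (b * (1 + |log (a + b)|))) ≤ negMulLog (a + ε * b) - negMulLog a := by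
  have hlog : log (a + ε * b) ≤ |log (a + b)| := by
    rcases (add_nonneg ha (mul_nonneg hε hb)).eq_or_lt with h | h
    · simp [← h]
    exact (log_le_log h (by nlinarith)).trans (le_abs_self _)
  have := mul_le_mul_of_nonneg_left hlog (by positivity : 0 ≤ ε * b)
  have := neg_le_negMulLog_add_sub ha (by positivity : 0 ≤ ε * b)
  nlinarith

lemma exists_mul_add_mul_mul_log_neg (C : ℝ) {r : ℝ} (hr : 0 < r) :
    ∃ ε : ℝ, 0 < ε ∧ ε ≤ 1 ∧ C * ε + r * (ε * log ε) < 0 := by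
  refine ⟨exp (-(|C| + 1) / r), exp_pos _, exp_le_one_iff.2 ?_, ?_⟩
  · exact div_nonpos_of_nonpos_of_nonneg (by linarith [abs_nonneg C]) hr.le
  · rw [log_exp]
    have : C * exp (-(|C| + 1) / r) + r * (exp (-(|C| + 1) / r) * (-(|C| + 1) / r))
        = exp (-(|C| + 1) / r) * (C - |C| - 1) := by field_simp; ring
    rw [this]
    exact mul_neg_of_pos_of_neg (exp_pos _) (by linarith [le_abs_self C])

end Real

section Increments

variable {ι : Type*}

lemma sum_negMulLog_add_mul_sub_le [Fintype ι] {a b : ι → ℝ} (hb : ∀ i, 0 ≤ b i)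
    (hab : ∀ i, 0 < b i → 0 < a i) {ε : ℝ} (hε : 0 ≤ ε) :
    ∑ i, (negMulLog (a i + ε * b i) - negMulLog (a i)) ≤ ε * ∑ i, b i * |log (a i)| := by
  rw [Finset.mul_sum]
  refine Finset.sum_le_sum fun i _ => ?_
  rcases (hb i).eq_or_lt with hbi | hbi
  · simp [← hbi]
  · simpa [mul_assoc] using negMulLog_add_sub_le (hab i hbi) (mul_nonneg hε hbi.le)

lemma neg_mul_sum_le_sum_negMulLog_add_mul_sub (s : Finset ι) {a b : ι → ℝ}
    (ha : ∀ i, 0 ≤ a i) (hb : ∀ i, 0 ≤ b i) {ε : ℝ} (hε : 0 ≤ ε) (hε₁ : ε ≤ 1) :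
    -(ε * ∑ i ∈ s, b i * (1 + |log (a i + b i)|)) ≤
      ∑ i ∈ s, (negMulLog (a i + ε * b i) - negMulLog (a i)) := by
  rw [Finset.mul_sum, ← Finset.sum_neg_distrib]
  exact Finset.sum_le_sum fun i _ => neg_mul_le_negMulLog_add_mul_sub (ha i) (hb i) hε hε₁

variable [Fintype ι]

lemma exists_negMulLog_sum_sub_sum_le (a b : ι → ℝ) (ha : ∀ i, 0 ≤ a i) (hb : ∀ i, 0 ≤ b i) :
    ∃ C : ℝ, ∀ ε : ℝ, 0 ≤ ε → ε ≤ 1 →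
      negMulLog (∑ i, a i + ε * ∑ i, b i) - negMulLog (∑ i, a i)
        - ∑ i, (negMulLog (a i + ε * b i) - negMulLog (a i)) ≤ C * ε := by
  rcases (Finset.sum_nonneg fun i _ => ha i).eq_or_lt with hzero | hpos
  · have ha₀ : ∀ i, a i = 0 := fun i =>
      (Finset.sum_eq_zero_iff_of_nonneg fun i _ => ha i).1 hzero.symm i (Finset.mem_univ i)
    refine ⟨0, fun ε hε _ => ?_⟩
    simp only [ha₀, Finset.sum_const_zero, zero_add, negMulLog_zero, sub_zero, zero_mul,
      Finset.mul_sum]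
    linarith [negMulLog_sum_le_sum_negMulLog Finset.univ fun i _ => mul_nonneg hε (hb i)]
  · refine ⟨(∑ i, b i) * |log (∑ i, a i)| + ∑ i, b i * (1 + |log (a i + b i)|),
      fun ε hε hε₁ => ?_⟩
    have hB : 0 ≤ ∑ i, b i := Finset.sum_nonneg fun i _ => hb i
    have h₁ := negMulLog_add_sub_le hpos (mul_nonneg hε hB)
    have h₂ := neg_mul_sum_le_sum_negMulLog_add_mul_sub Finset.univ ha hb hε hε₁
    linarith

lemma exists_negMulLog_sum_sub_sum_le_mul_log (a b : ι → ℝ) (ha : ∀ i, 0 ≤ a i)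
    (hb : ∀ i, 0 ≤ b i) {i₀ : ι} (ha₀ : a i₀ = 0) (hpos : 0 < ∑ i, a i) :
    ∃ C : ℝ, ∀ ε : ℝ, 0 ≤ ε → ε ≤ 1 →
      negMulLog (∑ i, a i + ε * ∑ i, b i) - negMulLog (∑ i, a i)
        - ∑ i, (negMulLog (a i + ε * b i) - negMulLog (a i))
        ≤ C * ε + b i₀ * (ε * log ε) := by
  classical
  refine ⟨(∑ i, b i) * |log (∑ i, a i)| - negMulLog (b i₀)
      + ∑ i ∈ Finset.univ.erase i₀, b i * (1 + |log (a i + b i)|), fun ε hε hε₁ => ?_⟩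
  have h₀ : negMulLog (a i₀ + ε * b i₀) - negMulLog (a i₀)
      = ε * negMulLog (b i₀) - b i₀ * (ε * log ε) := by
    rw [ha₀, zero_add, negMulLog_zero, sub_zero, negMulLog_mul, negMulLog]
    ring
  have hB : 0 ≤ ∑ i, b i := Finset.sum_nonneg fun i _ => hb i
  have h₁ := negMulLog_add_sub_le hpos (mul_nonneg hε hB)
  have h₂ := neg_mul_sum_le_sum_negMulLog_add_mul_sub (Finset.univ.erase i₀) ha hb hε hε₁
  rw [← Finset.add_sum_erase _ (fun i => negMulLog (a i + ε * b i) - negMulLog (a i))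
    (Finset.mem_univ i₀), h₀]
  linarith

end Increments

section ScaledMutInfo

variable {𝒳 𝒴 : Type*} [Fintype 𝒳] [Fintype 𝒴]

/-- For `w = p(·,·,z)` this is `p(z) · I(X:Y|Z=z)`, written with unnormalised entropies. -/
noncomputable def scaledMutInfo (w : 𝒳 → 𝒴 → ℝ) : ℝ :=
  ∑ x, negMulLog (∑ y, w x y) + ∑ y, negMulLog (∑ x, w x y)
    - ∑ x, ∑ y, negMulLog (w x y) - negMulLog (∑ x, ∑ y, w x y)

lemma scaledMutInfo_transpose (w : 𝒳 → 𝒴 → ℝ) :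
    scaledMutInfo (fun y x => w x y) = scaledMutInfo w := by
  simp only [scaledMutInfo]
  rw [Finset.sum_comm (f := fun y x => negMulLog (w x y)),
    Finset.sum_comm (f := fun y x => w x y)]
  ring

lemma scaledMutInfo_const_mul (c : ℝ) (w : 𝒳 → 𝒴 → ℝ) :
    scaledMutInfo (fun x y => c * w x y) = c * scaledMutInfo w := by
  simp only [scaledMutInfo, ← Finset.mul_sum, negMulLog_mul, Finset.sum_add_distrib,
    ← Finset.sum_mul]
  rw [Finset.sum_comm (f := fun y x => w x y)]
  ring

lemma scaledMutInfo_mul_eq_zero (f : 𝒳 → ℝ) {g : 𝒴 → ℝ} (hg : ∑ y, g y = 1) :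
    scaledMutInfo (fun x y => f x * g y) = 0 := by
  simp only [scaledMutInfo, ← Finset.mul_sum, ← Finset.sum_mul, hg, mul_one, negMulLog_mul,
    Finset.sum_add_distrib]
  ring

lemma scaledMutInfo_eq_zero_of_mul_eq_mul {w : 𝒳 → 𝒴 → ℝ} (hw : 0 < ∑ x, ∑ y, w x y)
    (hprod : ∀ x y, w x y * ∑ x', ∑ y', w x' y' = (∑ y', w x y') * ∑ x', w x' y) :
    scaledMutInfo w = 0 := by
  have hcol : ∑ y, (∑ x, w x y) / ∑ x, ∑ y, w x y = 1 := by
    rw [← Finset.sum_div, Finset.sum_comm, div_self hw.ne']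
  convert scaledMutInfo_mul_eq_zero (fun x => ∑ y, w x y) hcol using 2
  ext x y
  rw [mul_div_assoc', eq_div_iff hw.ne', hprod]

lemma scaledMutInfo_add_mul_sub (m r : 𝒳 → 𝒴 → ℝ) (ε : ℝ) :
    scaledMutInfo (fun x y => m x y + ε * r x y) - scaledMutInfo m =
      ∑ x, (negMulLog (∑ y, m x y + ε * ∑ y, r x y) - negMulLog (∑ y, m x y))
      + ∑ y, (negMulLog (∑ x, m x y + ε * ∑ x, r x y) - negMulLog (∑ x, m x y)
          - ∑ x, (negMulLog (m x y + ε * r x y) - negMulLog (m x y)))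
      - (negMulLog (∑ x, ∑ y, m x y + ε * ∑ x, ∑ y, r x y)
          - negMulLog (∑ x, ∑ y, m x y)) := by
  simp only [scaledMutInfo, Finset.sum_add_distrib, ← Finset.mul_sum, Finset.sum_sub_distrib]
  rw [Finset.sum_comm (f := fun y x => negMulLog (m x y + ε * r x y)),
    Finset.sum_comm (f := fun y x => negMulLog (m x y))]
  ring

variable {m r : 𝒳 → 𝒴 → ℝ} {x₀ : 𝒳} {y₀ : 𝒴}

lemma exists_scaledMutInfo_add_mul_sub_le (hm : ∀ x y, 0 ≤ m x y) (hr : ∀ x y, 0 ≤ r x y)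
    (hsupp : ∀ x, 0 < ∑ y, r x y → 0 < ∑ y, m x y) (hm₀ : m x₀ y₀ = 0)
    (hcol : 0 < ∑ x, m x y₀) :
    ∃ C : ℝ, ∀ ε : ℝ, 0 ≤ ε → ε ≤ 1 →
      scaledMutInfo (fun x y => m x y + ε * r x y) - scaledMutInfo m
        ≤ C * ε + r x₀ y₀ * (ε * log ε) := by
  classical
  choose C hC using fun y => exists_negMulLog_sum_sub_sum_le (m · y) (r · y) (hm · y) (hr · y)
  obtain ⟨C₀, hC₀⟩ := exists_negMulLog_sum_sub_sum_le_mul_log (m · y₀) (r · y₀) (hm · y₀)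
    (hr · y₀) hm₀ hcol
  have hM : 0 ≤ ∑ x, ∑ y, m x y :=
    Finset.sum_nonneg fun x _ => Finset.sum_nonneg fun y _ => hm x y
  have hR : 0 ≤ ∑ x, ∑ y, r x y :=
    Finset.sum_nonneg fun x _ => Finset.sum_nonneg fun y _ => hr x y
  refine ⟨∑ x, (∑ y, r x y) * |log (∑ y, m x y)| + (C₀ + ∑ y ∈ Finset.univ.erase y₀, C y)
      + (∑ x, ∑ y, r x y) * (1 + |log (∑ x, ∑ y, m x y + ∑ x, ∑ y, r x y)|),
    fun ε hε hε₁ => ?_⟩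
  have hrows := sum_negMulLog_add_mul_sub_le (a := fun x => ∑ y, m x y)
    (fun x => Finset.sum_nonneg fun y _ => hr x y) hsupp hε
  have hcols : ∑ y ∈ Finset.univ.erase y₀,
      (negMulLog (∑ x, m x y + ε * ∑ x, r x y) - negMulLog (∑ x, m x y)
        - ∑ x, (negMulLog (m x y + ε * r x y) - negMulLog (m x y)))
      ≤ (∑ y ∈ Finset.univ.erase y₀, C y) * ε := by
    rw [Finset.sum_mul]
    exact Finset.sum_le_sum fun y _ => hC y ε hε hε₁
  have htotal := neg_mul_le_negMulLog_add_mul_sub hM hR hε hε₁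
  rw [scaledMutInfo_add_mul_sub, ← Finset.add_sum_erase _ _ (Finset.mem_univ y₀)]
  linarith [hC₀ ε hε hε₁]

lemma exists_scaledMutInfo_add_mul_lt (hm : ∀ x y, 0 ≤ m x y) (hr : ∀ x y, 0 ≤ r x y)
    (hsupp : ∀ x, 0 < ∑ y, r x y → 0 < ∑ y, m x y) (hm₀ : m x₀ y₀ = 0)
    (hcol : 0 < ∑ x, m x y₀) (hr₀ : 0 < r x₀ y₀) :
    ∃ ε : ℝ, 0 < ε ∧ ε ≤ 1 ∧
      scaledMutInfo (fun x y => m x y + ε * r x y) < scaledMutInfo m := by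
  obtain ⟨C, hC⟩ := exists_scaledMutInfo_add_mul_sub_le hm hr hsupp hm₀ hcol
  obtain ⟨ε, hε, hε₁, hneg⟩ := exists_mul_add_mul_mul_log_neg C hr₀
  exact ⟨ε, hε, hε₁, by linarith [hC ε hε.le hε₁]⟩

end ScaledMutInfo

lemma cmi3_eq_sum_scaledMutInfo {𝒳 𝒴 𝒵 : Type*} [Fintype 𝒳] [Fintype 𝒴] [Fintype 𝒵]
    (q : 𝒳 × 𝒴 × 𝒵 → ℝ) : cmi3 q = ∑ u, scaledMutInfo (fun x y => q (x, y, u)) := by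
  simp only [cmi3, ent1, scaledMutInfo, Fintype.sum_prod_type, Finset.sum_sub_distrib,
    Finset.sum_add_distrib]
  rw [Finset.sum_comm (f := fun x u => negMulLog (∑ y, q (x, y, u))),
    Finset.sum_comm (f := fun y u => negMulLog (∑ x, q (x, y, u))),
    Finset.sum_congr rfl fun x _ => Finset.sum_comm (f := fun y u => negMulLog (q (x, y, u))),
    Finset.sum_comm (f := fun x u => ∑ y, negMulLog (q (x, y, u)))]

section Channels

variable {𝒵 : Type*} [Fintype 𝒵]

lemma isCompact_setOf_isChannel : IsCompact {c : 𝒵 → 𝒵 → ℝ | IsChannel c} := by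
  refine (isCompact_univ_pi fun _ => isCompact_univ_pi fun _ => isCompact_Icc (a := (0 : ℝ))
    (b := 1)).of_isClosed_subset ?_ fun c hc w _ u _ => ⟨hc.1 w u, ?_⟩
  · simp only [IsChannel, Set.ofPred_and, Set.ofPred_forall]
    exact (isClosed_iInter fun w => isClosed_iInter fun u =>
      isClosed_le continuous_const (by fun_prop)).inter
      (isClosed_iInter fun w => isClosed_eq (by fun_prop) continuous_const)
  · rw [← hc.2 w]
    exact Finset.single_le_sum (fun u _ => hc.1 w u) (Finset.mem_univ u)

lemma bddBelow_cmi3_applyChannel {𝒳 𝒴 : Type*} [Fintype 𝒳] [Fintype 𝒴]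
    (p : 𝒳 × 𝒴 × 𝒵 → ℝ) :
    BddBelow {m : ℝ | ∃ c : 𝒵 → 𝒵 → ℝ, IsChannel c ∧ m = cmi3 (applyChannel p c)} := by
  have hf : Continuous fun c : 𝒵 → 𝒵 → ℝ => cmi3 (applyChannel p c) := by
    unfold cmi3 ent1 applyChannel
    fun_prop
  refine (isCompact_setOf_isChannel.bddBelow_image hf.continuousOn).mono ?_
  rintro m ⟨c, hc, rfl⟩
  exact ⟨c, hc, rfl⟩

variable [DecidableEq 𝒵]

/-- The channel that moves the symbol `z` to `z'` with probability `ε` and fixes every other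
symbol. -/
noncomputable def mixChannel (z z' : 𝒵) (ε : ℝ) : 𝒵 → 𝒵 → ℝ := fun w u =>
  (if u = w then 1 else 0) +
    if w = z then ε * ((if u = z' then 1 else 0) - if u = z then 1 else 0) else 0

variable {z z' : 𝒵}

lemma isChannel_mixChannel (hzz' : z ≠ z') {ε : ℝ} (hε : 0 ≤ ε) (hε₁ : ε ≤ 1) :
    IsChannel (mixChannel z z' ε) := by
  refine ⟨fun w u => ?_, fun w => ?_⟩
  · unfold mixChannel
    split_ifs <;> simp_all
  · simp [mixChannel, Finset.sum_add_distrib, ← Finset.mul_sum, Finset.sum_sub_distrib]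

lemma applyChannel_mixChannel {𝒳 𝒴 : Type*} (p : 𝒳 × 𝒴 × 𝒵 → ℝ) (ε : ℝ) (x : 𝒳) (y : 𝒴)
    (u : 𝒵) : applyChannel p (mixChannel z z' ε) (x, y, u)
      = p (x, y, u) + ε * p (x, y, z) * ((if u = z' then 1 else 0) - if u = z then 1 else 0) := by
  simp [applyChannel, mixChannel, mul_add, Finset.sum_add_distrib]
  ring

lemma cmi3_applyChannel_mixChannel {𝒳 𝒴 : Type*} [Fintype 𝒳] [Fintype 𝒴]
    (p : 𝒳 × 𝒴 × 𝒵 → ℝ) (hzz' : z ≠ z') (ε : ℝ) :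
    cmi3 (applyChannel p (mixChannel z z' ε)) =
      cmi3 p - ε * scaledMutInfo (fun x y => p (x, y, z))
        + (scaledMutInfo (fun x y => p (x, y, z') + ε * p (x, y, z))
          - scaledMutInfo (fun x y => p (x, y, z'))) := by
  set q := applyChannel p (mixChannel z z' ε)
  have hz : (fun x y => q (x, y, z)) = fun x y => (1 - ε) * p (x, y, z) := by
    funext x y
    simp [q, applyChannel_mixChannel, hzz']
    ring
  have hz' : (fun x y => q (x, y, z')) = fun x y => p (x, y, z') + ε * p (x, y, z) := by
    funext x y
    simp [q, applyChannel_mixChannel, hzz'.symm]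
  have hpair := Fintype.sum_eq_add z z' hzz'
    (f := fun u => scaledMutInfo (fun x y => q (x, y, u))
      - scaledMutInfo (fun x y => p (x, y, u)))
    fun u hu => by simp [q, applyChannel_mixChannel, hu.1, hu.2]
  rw [Finset.sum_sub_distrib, ← cmi3_eq_sum_scaledMutInfo, ← cmi3_eq_sum_scaledMutInfo, hz, hz',
    scaledMutInfo_const_mul] at hpair
  linarith

end Channels

theorem intrinsic_lt_cmi_of_correlated_vs_product_general
    {𝒳 𝒵 : Type*} [Fintype 𝒳] [Fintype 𝒵]
    (p : 𝒳 × 𝒳 × 𝒵 → ℝ) (hp : IsProb p)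
    (z z' : 𝒵) (hzz' : z ≠ z')
    (hz : 0 < ∑ x, ∑ y, p (x, y, z))
    -- `p_{XY|Z=z}` is a product distribution:
    (hprod : ∀ x y : 𝒳,
      p (x, y, z) * (∑ x', ∑ y', p (x', y', z)) =
        (∑ y', p (x, y', z)) * (∑ x', p (x', y, z)))
    -- support inclusion of a marginal:
    (hsupp : (∀ x : 𝒳, 0 < ∑ y', p (x, y', z) → 0 < ∑ y', p (x, y', z')) ∨
             (∀ y : 𝒳, 0 < ∑ x', p (x', y, z) → 0 < ∑ x', p (x', y, z')))
    (x y : 𝒳)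
    (hxy : 0 < p (x, y, z))
    (hmarg : 0 < (∑ y', p (x, y', z')) * (∑ x', p (x', y, z')))
    (hzero : p (x, y, z') = 0) :
    sInf {m : ℝ | ∃ c : 𝒵 → 𝒵 → ℝ, IsChannel c ∧ m = cmi3 (applyChannel p c)} <
      cmi3 p := by
  classical
  have hp0 := hp.1
  have hrow := pos_of_mul_pos_left hmarg (Finset.sum_nonneg fun _ _ => hp0 _)
  have hcol := pos_of_mul_pos_right hmarg (Finset.sum_nonneg fun _ _ => hp0 _)
  obtain ⟨ε, hε, hε₁, hlt⟩ : ∃ ε : ℝ, 0 < ε ∧ ε ≤ 1 ∧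
      scaledMutInfo (fun a b => p (a, b, z') + ε * p (a, b, z))
        < scaledMutInfo (fun a b => p (a, b, z')) := by
    rcases hsupp with hX | hY
    · exact exists_scaledMutInfo_add_mul_lt (fun _ _ => hp0 _) (fun _ _ => hp0 _) hX hzero hcol
        hxy
    · obtain ⟨ε, hε, hε₁, hlt⟩ := exists_scaledMutInfo_add_mul_lt (m := fun b a => p (a, b, z'))
        (r := fun b a => p (a, b, z)) (fun _ _ => hp0 _) (fun _ _ => hp0 _) hY hzero hrow hxy
      rw [scaledMutInfo_transpose (fun a b => p (a, b, z') + ε * p (a, b, z)),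
        scaledMutInfo_transpose (fun a b => p (a, b, z'))] at hlt
      exact ⟨ε, hε, hε₁, hlt⟩
  refine (csInf_le (bddBelow_cmi3_applyChannel p)
    ⟨_, isChannel_mixChannel hzz' hε.le hε₁, rfl⟩).trans_lt ?_
  rw [cmi3_applyChannel_mixChannel p hzz', scaledMutInfo_eq_zero_of_mul_eq_mul hz hprod]
  linarith

/-- if `p_{XY|Z=z'}` is perfectly correlated (diagonal), `p_{XY|Z=z}` is a
product distribution for some `z ≠ z'` whose `X`- or `Y`-marginal support is contained in
that of `p_{XY|Z=z'}`, and some pair `(x,y)` has `p(x,y|z) > 0`, `p(x|z') p(y|z') > 0`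
but `p(x,y|z') = 0`, then the intrinsic information is strictly below `I(X:Y|Z)`. -/
theorem intrinsic_lt_cmi_of_correlated_vs_product
    {𝒳 𝒵 : Type*} [Fintype 𝒳] [Fintype 𝒵]
    (p : 𝒳 × 𝒳 × 𝒵 → ℝ) (hp : IsProb p)
    (z z' : 𝒵) (hzz' : z ≠ z')
    (hz : 0 < ∑ x, ∑ y, p (x, y, z)) (hz' : 0 < ∑ x, ∑ y, p (x, y, z'))
    -- `p_{XY|Z=z'}` is perfectly correlated (supported on the diagonal):
    (hcorr : ∀ x y : 𝒳, x ≠ y → p (x, y, z') = 0)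
    -- `p_{XY|Z=z}` is a product distribution:
    (hprod : ∀ x y : 𝒳,
      p (x, y, z) * (∑ x', ∑ y', p (x', y', z)) =
        (∑ y', p (x, y', z)) * (∑ x', p (x', y, z)))
    -- support inclusion of a marginal:
    (hsupp : (∀ x : 𝒳, 0 < ∑ y', p (x, y', z) → 0 < ∑ y', p (x, y', z')) ∨
             (∀ y : 𝒳, 0 < ∑ x', p (x', y, z) → 0 < ∑ x', p (x', y, z')))
    (x y : 𝒳)
    (hxy : 0 < p (x, y, z))
    (hmarg : 0 < (∑ y', p (x, y', z')) * (∑ x', p (x', y, z')))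
    (hzero : p (x, y, z') = 0) :
    sInf {m : ℝ | ∃ c : 𝒵 → 𝒵 → ℝ, IsChannel c ∧ m = cmi3 (applyChannel p c)} <
      cmi3 p :=
  intrinsic_lt_cmi_of_correlated_vs_product_general p hp z z' hzz' hz hprod hsupp x y hxy hmarg
    hzero
end
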